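/- arXiv:2509.01417 — 3 statements merged into one kernel-verified Lean document; each statement's English description precedes it below -/
import Mathlib

section
/- Let C be a monoidal groupoid with chosen right duals, let Star(C) and C₀ be the c-groups defined from C, and define r·(x, f) := (r ⊗ (x ⊗ rᘁ), γ_r ≫ (𝟙_r ⊗ (f ⊗ 𝟙_{rᘁ}))) for an object r of C and (x, f) ∈ Star(C), where γ_r := η_r ≫ (𝟙_r ⊗ (λ_{rᘁ})⁻¹) : 𝟙_C ⟶ r ⊗ (𝟙_C ⊗ rᘁ). Then this is an action of the c-group C₀ on the c-group Star(C): r·((x,f) + (y,g)) ∼ r·(x,f) + r·(y,g); (r + r')·(x,f) ∼ r·(r'·(x,f)); 𝟙_C·(x,f) ∼ (x,f); and r·(x,f) ∼ r'·(x',f') whenever r ≅ r' and (x,f) ∼ (x',f'). -/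
open CategoryTheory MonoidalCategory

/-- The data of a c-group: a relation, an addition, a zero and a negation. -/
structure CGroupData (G : Type*) where
  rel : G → G → Prop
  add : G → G → G
  zero : G
  neg : G → G

variable (C : Type*) [Groupoid C] [MonoidalCategory C] [RightRigidCategory C]

/-- The c-group `C₀` of objects: relation `x ∼ y` iff `x ≅ y`, addition `⊗`,
zero `𝟙_C`, negation `x ↦ xᘁ`. -/
def objectsCGroupData : CGroupData C where
  rel x y := Nonempty (x ≅ y)
  add x y := x ⊗ y
  zero := 𝟙_ C
  neg x := xᘁ

/-- `Star(C)`: pairs `(x, f)` with `f : 𝟙_C ⟶ x`. -/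
abbrev StarC := Σ x : C, (𝟙_ C ⟶ x)

/-- The c-group structure on `Star(C)`. -/
def starCGroupData : CGroupData (StarC C) where
  rel p q := ∃ (θ₀ : 𝟙_ C ≅ 𝟙_ C) (θ₁ : p.1 ≅ q.1), p.2 ≫ θ₁.hom = θ₀.hom ≫ q.2
  add p q := ⟨p.1 ⊗ q.1, (λ_ (𝟙_ C)).inv ≫ (p.2 ⊗ₘ q.2)⟩
  zero := ⟨𝟙_ C, 𝟙 (𝟙_ C)⟩
  neg p := ⟨p.1ᘁ, η_ p.1 (p.1ᘁ) ≫ (Groupoid.inv p.2 ⊗ₘ 𝟙 (p.1ᘁ)) ≫ (λ_ (p.1ᘁ)).hom⟩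

variable {C}

/-- `γ_r := η_r ≫ (𝟙_r ⊗ (λ_{rᘁ})⁻¹) : 𝟙_C ⟶ r ⊗ (𝟙_C ⊗ rᘁ)`. -/
def gammaC (r : C) : 𝟙_ C ⟶ r ⊗ (𝟙_ C ⊗ rᘁ) :=
  η_ r (rᘁ) ≫ (𝟙 r ⊗ₘ (λ_ (rᘁ)).inv)

/-- The action `r·(x, f) := (r ⊗ (x ⊗ rᘁ), γ_r ≫ (𝟙_r ⊗ (f ⊗ 𝟙_{rᘁ})))` of the objects
on `Star(C)`. -/
def actStar (r : C) (p : StarC C) : StarC C :=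
  ⟨r ⊗ (p.1 ⊗ rᘁ), gammaC r ≫ (𝟙 r ⊗ₘ (p.2 ⊗ₘ 𝟙 (rᘁ)))⟩

/-!
In a groupoid the point `f : 𝟙_C ⟶ x` of an element of `Star(C)` is invertible, so two elements
are related as soon as their underlying objects are isomorphic. Each action law thus reduces to an
isomorphism of objects, assembled from associators and unitors, the invertible evaluation
`rᘁ ⊗ r ≅ 𝟙_C`, and the uniqueness of right duals (for `(r ⊗ r')ᘁ`, `(𝟙_C)ᘁ` and `rᘁ` versus `r'ᘁ`).
-/

lemma starCGroupData_rel_iff {p q : StarC C} :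
    (starCGroupData C).rel p q ↔ Nonempty (p.1 ≅ q.1) := by
  refine ⟨fun ⟨_, θ₁, _⟩ => ⟨θ₁⟩, fun ⟨e⟩ => ?_⟩
  exact ⟨asIso (p.2 ≫ e.hom ≫ Groupoid.inv q.2), e, by simp [Groupoid.inv_eq_inv]⟩

lemma actStar_add (r : C) (p q : StarC C) :
    (starCGroupData C).rel (actStar r ((starCGroupData C).add p q))
      ((starCGroupData C).add (actStar r p) (actStar r q)) :=
  starCGroupData_rel_iff.2
    ⟨(⊗𝟙 ≪≫ whiskerLeftIso r (whiskerLeftIso p.1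
      (whiskerRightIso (asIso (ε_ r rᘁ)).symm (q.1 ⊗ rᘁ))) ≪⊗≫ Iso.refl _ :
        r ⊗ ((p.1 ⊗ q.1) ⊗ rᘁ) ≅ (r ⊗ (p.1 ⊗ rᘁ)) ⊗ (r ⊗ (q.1 ⊗ rᘁ)))⟩

lemma actStar_tensor (r r' : C) (p : StarC C) :
    (starCGroupData C).rel (actStar ((objectsCGroupData C).add r r') p)
      (actStar r (actStar r' p)) :=
  starCGroupData_rel_iff.2
    ⟨(whiskerLeftIso (r ⊗ r') (whiskerLeftIso p.1 (rightDualTensorIso r r')) ≪⊗≫ Iso.refl _ :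
      (r ⊗ r') ⊗ (p.1 ⊗ (r ⊗ r')ᘁ) ≅ r ⊗ ((r' ⊗ (p.1 ⊗ r'ᘁ)) ⊗ rᘁ))⟩

lemma actStar_unit (p : StarC C) :
    (starCGroupData C).rel (actStar ((objectsCGroupData C).zero) p) p :=
  starCGroupData_rel_iff.2
    -- Written with `zero` so that `ᘁ` uses the rigid structure rather than `hasRightDualUnit`.
    ⟨(whiskerLeftIso (𝟙_ C) (whiskerLeftIso p.1
      (rightDualIso HasRightDual.exact exactPairingUnit)) ≪⊗≫ Iso.refl _ :
        𝟙_ C ⊗ (p.1 ⊗ ((objectsCGroupData C).zero)ᘁ) ≅ p.1)⟩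

lemma actStar_congr {r r' : C} {p p' : StarC C} (hr : (objectsCGroupData C).rel r r')
    (hp : (starCGroupData C).rel p p') :
    (starCGroupData C).rel (actStar r p) (actStar r' p') := by
  obtain ⟨e⟩ := hr
  obtain ⟨θ⟩ := starCGroupData_rel_iff.1 hp
  exact starCGroupData_rel_iff.2
    ⟨e ⊗ᵢ θ ⊗ᵢ rightDualIso HasRightDual.exact (exactPairingCongrLeft e)⟩

/-- The formula `r·(x, f)` defines an action of the c-group `C₀` on the c-group
`Star(C)`. -/
theorem actStar_isAction :
    (∀ (r : C) (p q : StarC C),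
      (starCGroupData C).rel (actStar r ((starCGroupData C).add p q))
        ((starCGroupData C).add (actStar r p) (actStar r q))) ∧
    (∀ (r r' : C) (p : StarC C),
      (starCGroupData C).rel (actStar ((objectsCGroupData C).add r r') p)
        (actStar r (actStar r' p))) ∧
    (∀ p : StarC C,
      (starCGroupData C).rel (actStar ((objectsCGroupData C).zero) p) p) ∧
    (∀ (r r' : C) (p p' : StarC C),
      (objectsCGroupData C).rel r r' → (starCGroupData C).rel p p' →
        (starCGroupData C).rel (actStar r p) (actStar r' p')) :=
  ⟨actStar_add, actStar_tensor, actStar_unit, fun _ _ _ _ => actStar_congr⟩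
end

section
/- Let C be a monoidal groupoid with chosen right duals, and let d : cKer d₀(C) → C₀ be given by d(x, y, f) := y. Then: (1) d is a c-group morphism; (2) d(r·(x, y, f)) = r ⊗ (d(x, y, f) ⊗ rᘁ), i.e. the equality ∂(b·a) = b + (∂(a) + (−b)) holds; (3) d(x, y, f)·(x', y', f') ∼ (x, y, f) + ((x', y', f') + (−(x, y, f))) for all elements of cKer d₀(C); and (4) cKer d₀(C) is connected: any two of its elements are congruent. Hence (cKer d₀(C), C₀, d) is a connected c-crossed module. (Paper's Proposition: (cKer d₀, C₀, d) with d = d₁ restricted to cKer d₀ is a connected c-crossed module.) -/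
open CategoryTheory MonoidalCategory

variable (C : Type*) [Groupoid C] [MonoidalCategory C] [RightRigidCategory C]

/-- `cKer d₀(C)`: triples `(x, y, f)` with `f : x ⟶ y` and `x` isomorphic to `𝟙_C`. -/
structure CKerD0 where
  dom : C
  cod : C
  hom : dom ⟶ cod
  domIso : Nonempty (dom ≅ 𝟙_ C)

variable {C}

/-- The c-group structure on `cKer d₀(C)`. -/
def cKerCGroupData : CGroupData (CKerD0 C) where
  rel p q := ∃ (θ₀ : p.dom ≅ q.dom) (θ₁ : p.cod ≅ q.cod),
    p.hom ≫ θ₁.hom = θ₀.hom ≫ q.hom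
  add p q := ⟨p.dom ⊗ q.dom, p.cod ⊗ q.cod, p.hom ⊗ₘ q.hom,
    p.domIso.elim fun i => q.domIso.elim fun j => ⟨(i ⊗ᵢ j) ≪≫ λ_ (𝟙_ C)⟩⟩
  zero := ⟨𝟙_ C, 𝟙_ C, 𝟙 (𝟙_ C), ⟨Iso.refl _⟩⟩
  neg p := ⟨p.domᘁ, p.codᘁ, (Groupoid.inv p.hom)ᘁ,
    p.domIso.elim fun i =>
      ⟨(ρ_ (p.domᘁ)).symm ≪≫ whiskerLeftIso (p.domᘁ) i.symm ≪≫
        asIso (ε_ p.dom (p.domᘁ))⟩⟩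

/-- The conjugation action of the objects on `cKer d₀(C)`. -/
def actCKer (r : C) (p : CKerD0 C) : CKerD0 C :=
  ⟨r ⊗ (p.dom ⊗ rᘁ), r ⊗ (p.cod ⊗ rᘁ), 𝟙 r ⊗ₘ (p.hom ⊗ₘ 𝟙 (rᘁ)),
    p.domIso.elim fun i =>
      ⟨whiskerLeftIso r ((i ⊗ᵢ Iso.refl (rᘁ)) ≪≫ λ_ (rᘁ)) ≪≫
        (asIso (η_ r (rᘁ))).symm⟩⟩

/-- The boundary map `d : cKer d₀(C) → C₀`, `d(x, y, f) := y`. -/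
def dCKer (p : CKerD0 C) : C := p.cod

/-! Every morphism of a groupoid is invertible, so two triples whose domains are identified
(and any two domains are, through `𝟙_C`) have their codomains identified through the two
morphisms. Hence all elements of `cKer d₀(C)` are congruent, which gives connectedness and
axiom (ii) at once; `d` commutes with `⊗` and with the action on the nose. -/

theorem Groupoid.exists_iso_comm {G : Type*} [Groupoid G] {x y x' y' : G} (f : x ⟶ y)
    (f' : x' ⟶ y') (θ₀ : x ≅ x') : ∃ θ₁ : y ≅ y', f ≫ θ₁.hom = θ₀.hom ≫ f' :=
  ⟨(asIso f).symm ≪≫ θ₀ ≪≫ asIso f', by simp⟩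

namespace CKerD0

theorem cKerCGroupData_rel (p q : CKerD0 C) : (cKerCGroupData (C := C)).rel p q := by
  obtain ⟨i⟩ := p.domIso
  obtain ⟨j⟩ := q.domIso
  exact ⟨i ≪≫ j.symm, Groupoid.exists_iso_comm p.hom q.hom (i ≪≫ j.symm)⟩

theorem dCKer_add (p q : CKerD0 C) :
    dCKer ((cKerCGroupData (C := C)).add p q) = (objectsCGroupData C).add (dCKer p) (dCKer q) :=
  rfl

theorem objectsCGroupData_rel_dCKer {p q : CKerD0 C} (h : (cKerCGroupData (C := C)).rel p q) :
    (objectsCGroupData C).rel (dCKer p) (dCKer q) :=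
  let ⟨_, θ₁, _⟩ := h
  ⟨θ₁⟩

theorem dCKer_actCKer (r : C) (p : CKerD0 C) :
    dCKer (actCKer r p) =
      (objectsCGroupData C).add r
        ((objectsCGroupData C).add (dCKer p) ((objectsCGroupData C).neg r)) :=
  rfl

end CKerD0

/-- `(cKer d₀(C), C₀, d)` is a connected c-crossed module: `d` is a c-group morphism,
`d(r·(x,y,f)) = r ⊗ (d(x,y,f) ⊗ rᘁ)`, `d(x,y,f)·(x',y',f') ∼ (x,y,f) + ((x',y',f') +
(−(x,y,f)))`, and `cKer d₀(C)` is connected. -/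
theorem cKer_cCrossedModule :
    -- (1) `d` is a c-group morphism
    (∀ p q : CKerD0 C, dCKer ((cKerCGroupData (C := C)).add p q) =
      (objectsCGroupData C).add (dCKer p) (dCKer q)) ∧
    (∀ p q : CKerD0 C, (cKerCGroupData (C := C)).rel p q →
      (objectsCGroupData C).rel (dCKer p) (dCKer q)) ∧
    -- (2) `∂(b·a) = b + (∂(a) + (−b))` holds as an equality
    (∀ (r : C) (p : CKerD0 C), dCKer (actCKer r p) =
      (objectsCGroupData C).add r
        ((objectsCGroupData C).add (dCKer p) ((objectsCGroupData C).neg r))) ∧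
    -- (3) `∂(a)·a₁ ∼ a + (a₁ + (−a))`
    (∀ p q : CKerD0 C, (cKerCGroupData (C := C)).rel (actCKer (dCKer p) q)
      ((cKerCGroupData (C := C)).add p
        ((cKerCGroupData (C := C)).add q ((cKerCGroupData (C := C)).neg p)))) ∧
    -- (4) `cKer d₀(C)` is connected
    (∀ p q : CKerD0 C, (cKerCGroupData (C := C)).rel p q) := by
  exact ⟨CKerD0.dCKer_add, fun _ _ => CKerD0.objectsCGroupData_rel_dCKer,
    CKerD0.dCKer_actCKer, fun _ _ => CKerD0.cKerCGroupData_rel _ _, CKerD0.cKerCGroupData_rel⟩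
end

section
/- Let (M, N, ∂) be a c-crossed module which is special in the following sense: whenever ∂(c) ∼ r for some c ∈ M and r ∈ N, there exists c' ∈ M with c' ∼ c and ∂(c') = r. Then for any r, r' ∈ N with r ∼ r', there exists an element c ∈ M with c ∼ 0_M and ∂(c) = r' + (−r). (Existence part of the paper's Lemma 2 on cssc-crossed modules.) -/
/-- The axioms of a c-group (a group up to congruence relation). -/
structure IsCGroup {G : Type*} (D : CGroupData G) : Prop where
  refl : ∀ a, D.rel a a
  symm : ∀ a b, D.rel a b → D.rel b a
  trans : ∀ a b c, D.rel a b → D.rel b c → D.rel a c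
  add_congr : ∀ a a' b b', D.rel a a' → D.rel b b' → D.rel (D.add a b) (D.add a' b')
  add_assoc : ∀ a b c, D.rel (D.add a (D.add b c)) (D.add (D.add a b) c)
  add_zero : ∀ a, D.rel (D.add a D.zero) a
  zero_add : ∀ a, D.rel (D.add D.zero a) a
  add_neg : ∀ a, D.rel (D.add a (D.neg a)) D.zero
  neg_add : ∀ a, D.rel (D.add (D.neg a) a) D.zero

/-- Existence part of the paper's Lemma 2 on cssc-crossed modules: in a special c-crossed
module `(M, N, d)`, for any congruence `r ∼ r'` in `N` there exists `c ∈ M` with `c ∼ 0`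
and `d(c) = r' + (−r)`. -/
theorem special_cCrossedModule_exists_of_congr {M N : Type*}
    (DM : CGroupData M) (DN : CGroupData N)
    (hM : IsCGroup DM) (hN : IsCGroup DN)
    (d : M → N)
    (d_add : ∀ a b, d (DM.add a b) = DN.add (d a) (d b))
    (d_congr : ∀ a b, DM.rel a b → DN.rel (d a) (d b))
    (act : N → M → M)
    (act_add : ∀ b a a₁, DM.rel (act b (DM.add a a₁)) (DM.add (act b a) (act b a₁)))
    (add_act : ∀ b b₁ a, DM.rel (act (DN.add b b₁) a) (act b (act b₁ a)))
    (zero_act : ∀ a, DM.rel (act DN.zero a) a)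
    (act_congr : ∀ b b₁ a a₁, DN.rel b b₁ → DM.rel a a₁ → DM.rel (act b a) (act b₁ a₁))
    (peiffer₁ : ∀ b a, d (act b a) = DN.add b (DN.add (d a) (DN.neg b)))
    (peiffer₂ : ∀ a a₁, DM.rel (act (d a) a₁) (DM.add a (DM.add a₁ (DM.neg a))))
    (special : ∀ c r, DN.rel (d c) r → ∃ c', DM.rel c' c ∧ d c' = r) :
    ∀ r r', DN.rel r r' → ∃ c, DM.rel c DM.zero ∧ d c = DN.add r' (DN.neg r) := by
  intro r r' hrr'
  -- d 0 ∼ 0 in N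
  have h1 : DN.rel (d (DM.add DM.zero DM.zero)) (d DM.zero) :=
    d_congr _ _ (hM.add_zero DM.zero)
  rw [d_add] at h1
  have h2 : DN.rel (d DM.zero) DN.zero := by
    have e1 : DN.rel (d DM.zero) (DN.add (d DM.zero) (DN.add (d DM.zero) (DN.neg (d DM.zero)))) :=
      hN.symm _ _ (hN.trans _ _ _ (hN.add_congr _ _ _ _ (hN.refl _) (hN.add_neg _)) (hN.add_zero _))
    have e2 : DN.rel (DN.add (d DM.zero) (DN.add (d DM.zero) (DN.neg (d DM.zero))))
        (DN.add (DN.add (d DM.zero) (d DM.zero)) (DN.neg (d DM.zero))) := hN.add_assoc _ _ _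
    have e3 : DN.rel (DN.add (DN.add (d DM.zero) (d DM.zero)) (DN.neg (d DM.zero)))
        (DN.add (d DM.zero) (DN.neg (d DM.zero))) := hN.add_congr _ _ _ _ h1 (hN.refl _)
    exact hN.trans _ _ _ e1 (hN.trans _ _ _ e2 (hN.trans _ _ _ e3 (hN.add_neg _)))
  -- r' + (−r) ∼ 0 in N
  have h3 : DN.rel (DN.add r' (DN.neg r)) DN.zero :=
    hN.trans _ _ _ (hN.add_congr _ _ _ _ (hN.symm _ _ hrr') (hN.refl _)) (hN.add_neg r)
  have h4 : DN.rel (d DM.zero) (DN.add r' (DN.neg r)) :=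
    hN.trans _ _ _ h2 (hN.symm _ _ h3)
  exact special DM.zero _ h4
end
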